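/- Let S be a finite set of slopes containing the meridian (1,0), such that every element of S has distance at most 2 from (1,0), and the diameter of S is at most 8. Then the cardinality of S is at most 10. -/
import Mathlib

private lemma T2card (T2 : Finset ℤ) (hodd : ∀ n ∈ T2, n % 2 = 1)
    (h2 : ∀ n ∈ T2, ∀ n' ∈ T2, |n - n'| ≤ 4) : T2.card ≤ 3 := by
  rcases T2.eq_empty_or_nonempty with h | h
  · simp [h]
  · have hcm : T2.min' h ∈ T2 := T2.min'_mem h
    set c := T2.min' h with hc
    have hsub : T2 ⊆ {c, c + 2, c + 4} := by
      intro n hn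
      have h1 := T2.min'_le n hn
      have h3 := abs_le.mp (h2 n hn c hcm)
      have h4 := hodd n hn
      have h5 := hodd c hcm
      simp only [Finset.mem_insert, Finset.mem_singleton]
      omega
    calc T2.card ≤ ({c, c + 2, c + 4} : Finset ℤ).card := Finset.card_le_card hsub
      _ ≤ 3 := by
        apply (Finset.card_insert_le _ _).trans
        apply Nat.succ_le_succ
        apply (Finset.card_insert_le _ _).trans
        simp

private lemma keyCount (T1 T2 : Finset ℤ)
    (h1 : ∀ m ∈ T1, ∀ m' ∈ T1, |m - m'| ≤ 8)
    (hodd : ∀ n ∈ T2, n % 2 = 1)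
    (h2 : ∀ n ∈ T2, ∀ n' ∈ T2, |n - n'| ≤ 4)
    (h12 : ∀ m ∈ T1, ∀ n ∈ T2, |2 * m - n| ≤ 8) :
    T1.card + T2.card ≤ 9 := by
  rcases T1.eq_empty_or_nonempty with h | h
  · have := T2card T2 hodd h2
    simp only [h, Finset.card_empty]
    omega
  · have ha : T1.min' h ∈ T1 := T1.min'_mem h
    have hb : T1.max' h ∈ T1 := T1.max'_mem h
    set a := T1.min' h with hao
    set b := T1.max' h with hbo
    have hab : a ≤ b := T1.min'_le b hb
    have hd : b - a ≤ 8 := by have := abs_le.mp (h1 b hb a ha); omega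
    have hT1 : T1.card ≤ (b - a).toNat + 1 := by
      have hsub : T1 ⊆ Finset.Icc a b := fun m hm =>
        Finset.mem_Icc.mpr ⟨T1.min'_le m hm, T1.le_max' m hm⟩
      calc T1.card ≤ (Finset.Icc a b).card := Finset.card_le_card hsub
        _ = (b + 1 - a).toNat := Int.card_Icc a b
        _ ≤ (b - a).toNat + 1 := by omega
    by_cases h5 : b - a ≤ 5
    · have := T2card T2 hodd h2
      omega
    · -- b - a ∈ {6, 7, 8}
      by_cases h6 : b - a ≤ 6
      · have hsub : T2 ⊆ {2 * a + 5, 2 * a + 7} := by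
          intro n hn
          have e1 := abs_le.mp (h12 a ha n hn)
          have e2 := abs_le.mp (h12 b hb n hn)
          have e3 := hodd n hn
          simp only [Finset.mem_insert, Finset.mem_singleton]
          omega
        have hT2 : T2.card ≤ 2 := by
          calc T2.card ≤ ({2 * a + 5, 2 * a + 7} : Finset ℤ).card :=
            Finset.card_le_card hsub
            _ ≤ 2 := by
              apply (Finset.card_insert_le _ _).trans
              simp
        omega
      · by_cases h7 : b - a ≤ 7
        · have hsub : T2 ⊆ {2 * a + 7} := by
            intro n hn
            have e1 := abs_le.mp (h12 a ha n hn)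
            have e2 := abs_le.mp (h12 b hb n hn)
            have e3 := hodd n hn
            simp only [Finset.mem_singleton]
            omega
          have hT2 : T2.card ≤ 1 := by
            calc T2.card ≤ ({2 * a + 7} : Finset ℤ).card := Finset.card_le_card hsub
              _ = 1 := Finset.card_singleton _
          omega
        · have hT2 : T2 = ∅ := by
            apply Finset.eq_empty_of_forall_notMem
            intro n hn
            have e1 := abs_le.mp (h12 a ha n hn)
            have e2 := abs_le.mp (h12 b hb n hn)
            have e3 := hodd n hn
            omega
          rw [hT2]
          simp only [Finset.card_empty]
          omega

/-- Main combinatorial theorem: a finite set S of slopes (primitive vectors up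
to sign, no two elements being negatives of each other) containing the meridian
(1,0), with every element at distance at most 2 from (1,0) and diameter at most
8, has cardinality at most 10. -/
theorem slopes_near_meridian_diam_eight_card_le_ten
    (S : Finset (ℤ × ℤ))
    (hmer : ((1 : ℤ), (0 : ℤ)) ∈ S)
    (hprim : ∀ p ∈ S, Int.gcd p.1 p.2 = 1)
    (hsign : ∀ p ∈ S, ∀ q ∈ S, p ≠ -q)
    (hdist : ∀ p ∈ S, |1 * p.2 - 0 * p.1| ≤ 2)
    (hdiam : ∀ p ∈ S, ∀ q ∈ S, |p.1 * q.2 - p.2 * q.1| ≤ 8) :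
    S.card ≤ 10 := by
  classical
  set S0 := S.filter (fun p => p.2 = 0) with hS0def
  set S1 := S.filter (fun p => p.2 = 1 ∨ p.2 = -1) with hS1def
  set S2 := S.filter (fun p => p.2 = 2 ∨ p.2 = -2) with hS2def
  -- covering
  have hcover : S ⊆ S0 ∪ S1 ∪ S2 := by
    intro p hp
    have hb := abs_le.mp (hdist p hp)
    simp only [hS0def, hS1def, hS2def, Finset.mem_union, Finset.mem_filter, hp, true_and]
    omega
  -- card of S0
  have hS0 : S0.card ≤ 1 := by
    have hsub : S0 ⊆ {((1 : ℤ), (0 : ℤ))} := by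
      intro p hp
      rw [hS0def, Finset.mem_filter] at hp
      obtain ⟨hpS, hp2⟩ := hp
      have hg : p.1.natAbs = 1 := by
        have := hprim p hpS
        rw [hp2] at this
        simpa using this
      have h1 : p.1 = 1 ∨ p.1 = -1 := by omega
      rcases h1 with h1 | h1
      · simp only [Finset.mem_singleton]
        exact Prod.ext_iff.mpr ⟨h1, hp2⟩
      · exfalso
        apply hsign p hpS ((1 : ℤ), (0 : ℤ)) hmer
        apply Prod.ext_iff.mpr
        constructor <;> simp [h1, hp2]
    calc S0.card ≤ _ := Finset.card_le_card hsub
      _ = 1 := Finset.card_singleton _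
  -- image maps
  set T1 := S1.image (fun p => p.1 * p.2) with hT1def
  set T2 := S2.image (fun p => if p.2 = 2 then p.1 else -p.1) with hT2def
  have hnegne : ∀ p ∈ S, ∀ q ∈ S, ¬(p.1 = -q.1 ∧ p.2 = -q.2) := by
    intro p hp q hq ⟨e1, e2⟩
    exact hsign p hp q hq (Prod.ext_iff.mpr ⟨by simpa using e1, by simpa using e2⟩)
  have hc1 : S1.card = T1.card := by
    rw [hT1def]
    rw [Finset.card_image_of_injOn]
    intro p hp q hq heq
    simp only [Finset.mem_coe, hS1def, Finset.mem_filter] at hp hq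
    have hne := hnegne p hp.1 q hq.1
    have heq2 : p.1 * p.2 = q.1 * q.2 := heq
    rcases hp.2 with h | h <;> rcases hq.2 with h' | h' <;>
      rw [h, h'] at heq2 <;>
      exact Prod.ext_iff.mpr ⟨by omega, by omega⟩
  have hc2 : S2.card = T2.card := by
    rw [hT2def]
    rw [Finset.card_image_of_injOn]
    intro p hp q hq heq
    simp only [Finset.mem_coe, hS2def, Finset.mem_filter] at hp hq
    have hne := hnegne p hp.1 q hq.1
    have heq2 : (if p.2 = 2 then p.1 else -p.1) = (if q.2 = 2 then q.1 else -q.1) := heq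
    rcases hp.2 with h | h <;> rcases hq.2 with h' | h' <;>
      simp only [h, h', reduceIte] at heq2 <;>
      exact Prod.ext_iff.mpr ⟨by omega, by omega⟩
  -- properties of T1, T2
  have p1 : ∀ m ∈ T1, ∀ m' ∈ T1, |m - m'| ≤ 8 := by
    intro m hm m' hm'
    rw [hT1def, Finset.mem_image] at hm hm'
    obtain ⟨p, hp, rfl⟩ := hm
    obtain ⟨q, hq, rfl⟩ := hm'
    rw [hS1def, Finset.mem_filter] at hp hq
    have hdet := abs_le.mp (hdiam p hp.1 q hq.1)
    rw [abs_le]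
    rcases hp.2 with h | h <;> rcases hq.2 with h' | h' <;>
      rw [h, h'] at hdet ⊢ <;> constructor <;> omega
  have podd : ∀ n ∈ T2, n % 2 = 1 := by
    intro n hn
    rw [hT2def, Finset.mem_image] at hn
    obtain ⟨p, hp, rfl⟩ := hn
    rw [hS2def, Finset.mem_filter] at hp
    have hodd1 : ¬ (2 : ℤ) ∣ p.1 := by
      intro hdvd
      have hd2 : (2 : ℤ) ∣ p.2 := by rcases hp.2 with h | h <;> simp [h]
      have hdg := Int.dvd_gcd hdvd hd2
      rw [hprim p hp.1] at hdg
      norm_num at hdg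
    rcases hp.2 with h | h <;> simp only [h, if_pos rfl, reduceIte] <;> omega
  have p2 : ∀ n ∈ T2, ∀ n' ∈ T2, |n - n'| ≤ 4 := by
    intro n hn n' hn'
    rw [hT2def, Finset.mem_image] at hn hn'
    obtain ⟨p, hp, rfl⟩ := hn
    obtain ⟨q, hq, rfl⟩ := hn'
    rw [hS2def, Finset.mem_filter] at hp hq
    have hdet := abs_le.mp (hdiam p hp.1 q hq.1)
    rw [abs_le]
    rcases hp.2 with h | h <;> rcases hq.2 with h' | h' <;>
      rw [h, h'] at hdet <;> simp only [h, h', if_pos rfl, reduceIte] <;>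
      constructor <;> omega
  have p12 : ∀ m ∈ T1, ∀ n ∈ T2, |2 * m - n| ≤ 8 := by
    intro m hm n hn
    rw [hT1def, Finset.mem_image] at hm
    rw [hT2def, Finset.mem_image] at hn
    obtain ⟨p, hp, rfl⟩ := hm
    obtain ⟨q, hq, rfl⟩ := hn
    rw [hS1def, Finset.mem_filter] at hp
    rw [hS2def, Finset.mem_filter] at hq
    have hdet := abs_le.mp (hdiam p hp.1 q hq.1)
    rw [abs_le]
    rcases hp.2 with h | h <;> rcases hq.2 with h' | h' <;>
      rw [h, h'] at hdet <;> simp only [h, h', if_pos rfl, reduceIte] <;>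
      constructor <;> omega
  have hkey := keyCount T1 T2 p1 podd p2 p12
  calc S.card ≤ (S0 ∪ S1 ∪ S2).card := Finset.card_le_card hcover
    _ ≤ (S0 ∪ S1).card + S2.card := Finset.card_union_le _ _
    _ ≤ S0.card + S1.card + S2.card := by
        have := Finset.card_union_le S0 S1
        omega
    _ ≤ 10 := by omega
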